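/- The linear operators R₁ (R₁(e₁₁)=e₁₂, R₁(e₁₂)=0, R₁(e₂₁)=0, R₁(e₂₂)=−e₁₂) and R₂ (R₂(e₁₁)=0, R₂(e₁₂)=e₁₁, R₂(e₂₁)=e₁₁, R₂(e₂₂)=0) are both symmetrized Rota–Baxter operators of weight 0 on the associative algebra M₂(F). -/

import Mathlib

/-! Both operators have rank one: `R₁ x = (x₁₁ - x₂₂) e₁₂` with `e₁₂² = 0`, and
`R₂ x = (x₁₂ + x₂₁) e₁₁` with `e₁₁² = e₁₁`. For `R x = f x • e` with `e * e = c • e` and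
`f (e z + z e) = c f z`, both sides of the symmetrized Rota–Baxter identity equal
`2 c f(x) f(y) e`. -/

def E (F : Type*) [Field F] (i j : Fin 2) : Matrix (Fin 2) (Fin 2) F :=
  Matrix.single i j 1

def IsSymmetrizedRotaBaxter {K A : Type*} [CommRing K] [Ring A] [Algebra K A]
    (R : A →ₗ[K] A) : Prop :=
  ∀ x y, (2 : K) • (R x * R y) = R (R x * y + x * R y + y * R x + R y * x)

theorem isSymmetrizedRotaBaxter_smulRight {K A : Type*} [CommRing K] [Ring A] [Algebra K A]
    (f : A →ₗ[K] K) (e : A) (c : K) (he : e * e = c • e)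
    (hf : ∀ z, f (e * z + z * e) = c * f z) :
    IsSymmetrizedRotaBaxter (f.smulRight e) := by
  intro x y
  simp only [LinearMap.smulRight_apply]
  have hsum : f x • e * y + x * f y • e + y * f x • e + f y • e * x =
      f x • (e * y + y * e) + f y • (e * x + x * e) := by
    simp only [smul_mul_assoc, mul_smul_comm, smul_add]
    abel
  rw [hsum, map_add, map_smul, map_smul, hf, hf, smul_mul_smul_comm, he, smul_smul, smul_smul]
  congr 1
  simp only [smul_eq_mul]
  ring

theorem linearMap_ext_E {F : Type*} [Field F]
    {R S : Matrix (Fin 2) (Fin 2) F →ₗ[F] Matrix (Fin 2) (Fin 2) F}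
    (h : ∀ i j, R (E F i j) = S (E F i j)) : R = S :=
  Matrix.ext_linearMap F fun i j => LinearMap.ext fun a => by
    simpa only [LinearMap.comp_apply, Matrix.singleLinearMap_apply, E, ← map_smul,
      Matrix.smul_single, smul_eq_mul, mul_one] using congrArg (a • ·) (h i j)

theorem both_are_symmetrized_RB {F : Type*} [Field F]
    (R₁ R₂ : Matrix (Fin 2) (Fin 2) F →ₗ[F] Matrix (Fin 2) (Fin 2) F)
    (h₁11 : R₁ (E F 0 0) = E F 0 1) (h₁12 : R₁ (E F 0 1) = 0)
    (h₁21 : R₁ (E F 1 0) = 0) (h₁22 : R₁ (E F 1 1) = -E F 0 1)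
    (h₂11 : R₂ (E F 0 0) = 0) (h₂12 : R₂ (E F 0 1) = E F 0 0)
    (h₂21 : R₂ (E F 1 0) = E F 0 0) (h₂22 : R₂ (E F 1 1) = 0) :
    (∀ x y : Matrix (Fin 2) (Fin 2) F,
      (2 : F) • (R₁ x * R₁ y) = R₁ (R₁ x * y + x * R₁ y + y * R₁ x + R₁ y * x)) ∧
    (∀ x y : Matrix (Fin 2) (Fin 2) F,
      (2 : F) • (R₂ x * R₂ y) = R₂ (R₂ x * y + x * R₂ y + y * R₂ x + R₂ y * x)) := by
  have hR₁ : R₁ = (Matrix.entryLinearMap F F (0 : Fin 2) (0 : Fin 2) -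
      Matrix.entryLinearMap F F 1 1).smulRight (E F 0 1) :=
    linearMap_ext_E <| by
      simp only [Fin.forall_fin_two, h₁11, h₁12, h₁21, h₁22]
      simp [E]
  have hR₂ : R₂ = (Matrix.entryLinearMap F F (0 : Fin 2) (1 : Fin 2) +
      Matrix.entryLinearMap F F 1 0).smulRight (E F 0 0) :=
    linearMap_ext_E <| by
      simp only [Fin.forall_fin_two, h₂11, h₂12, h₂21, h₂22]
      simp [E]
  exact ⟨hR₁ ▸ isSymmetrizedRotaBaxter_smulRight _ _ 0 (by simp [E]) fun z => by simp [E],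
    hR₂ ▸ isSymmetrizedRotaBaxter_smulRight _ _ 1 (by simp [E]) fun z => by simp [E]⟩
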